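/- Let μ₁, μ₂ ∈ ℝ and σ₁, σ₂ > 0, and for j, k ∈ ℤ define μ(j,k), σ̄, and w(j,k) as follows: μ(j,k) = ((μ₁ + 2πj) σ₂² + (μ₂ + 2πk) σ₁²)/(σ₁² + σ₂²), σ̄ = √(σ₁² σ₂² / (σ₁² + σ₂²)), w(j,k) = exp(−((μ₁ + 2πj) − (μ₂ + 2πk))² / (2(σ₁² + σ₂²))) / √(2π(σ₁² + σ₂²)). Then ∫_0^{2π} exp(i x) f_WN(x; μ₁, σ₁) f_WN(x; μ₂, σ₂) dx = ∑_{j,k ∈ ℤ} w(j,k) ∫_0^{2π} exp(i x) N(x; μ(j,k), σ̄) dx. -/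

import Mathlib

open MeasureTheory

/-- Wrapped normal density with location `μ` and concentration `σ`. -/
noncomputable def wnDensity (μ σ x : ℝ) : ℝ :=
  (1 / (Real.sqrt (2 * Real.pi) * σ)) *
    ∑' k : ℤ, Real.exp (-(x - μ + 2 * Real.pi * (k : ℝ)) ^ 2 / (2 * σ ^ 2))

/-- One-dimensional Gaussian density with mean `μ` and standard deviation `σ`. -/
noncomputable def gaussDensity (μ σ x : ℝ) : ℝ :=
  (1 / (Real.sqrt (2 * Real.pi) * σ)) * Real.exp (-(x - μ) ^ 2 / (2 * σ ^ 2))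

open Real
open scoped ENNReal

/-!
Unwrapping gives `f_WN(x; μ, σ) = ∑ₖ N(x; μ + 2πk, σ)`, and completing the square gives
`N(x; a, σ₁) N(x; b, σ₂) = w · N(x; (aσ₂² + bσ₁²)/(σ₁² + σ₂²), σ̄)`, so the product of the two
wrapped densities is a double series of nonnegative Gaussians. Gaussian decay in `k` makes the
unwrapped series converge locally uniformly, so the wrapped densities are continuous and their
product is integrable on `[0, 2π]`; as `|e^{ix}| = 1`, monotone convergence then lets the integral
commute with the double sum.
-/

lemma summable_exp_neg_mul_int_sq {c : ℝ} (hc : 0 < c) :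
    Summable fun n : ℤ => exp (-c * (n : ℝ) ^ 2) := by
  refine (summable_pow_mul_jacobiTheta₂_term_bound 0 (T := c / π) (by positivity) 0).congr
    fun n => ?_
  rw [pow_zero, one_mul]
  congr 1
  field_simp
  ring

lemma exp_neg_sq_sub_two_pi_mul_le (a σ t : ℝ) :
    exp (-(a - 2 * π * t) ^ 2 / (2 * σ ^ 2)) ≤
      exp (a ^ 2 / (2 * σ ^ 2)) * exp (-(π / σ) ^ 2 * t ^ 2) := by
  rw [← exp_add, exp_le_exp, ← sub_nonneg]
  have hgap : a ^ 2 / (2 * σ ^ 2) + -(π / σ) ^ 2 * t ^ 2 - -(a - 2 * π * t) ^ 2 / (2 * σ ^ 2) =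
      (a - π * t) ^ 2 / σ ^ 2 := by
    ring
  rw [hgap]
  positivity

lemma gaussDensity_nonneg {σ : ℝ} (hσ : 0 ≤ σ) (μ x : ℝ) : 0 ≤ gaussDensity μ σ x := by
  unfold gaussDensity
  positivity

lemma continuous_gaussDensity (μ σ : ℝ) : Continuous (gaussDensity μ σ) := by
  unfold gaussDensity
  fun_prop

lemma gaussDensity_add_two_pi_mul_le {σ : ℝ} (hσ : 0 ≤ σ) (μ x t : ℝ) :
    gaussDensity (μ + 2 * π * t) σ x ≤
      1 / (√(2 * π) * σ) * exp ((x - μ) ^ 2 / (2 * σ ^ 2)) * exp (-(π / σ) ^ 2 * t ^ 2) := by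
  rw [gaussDensity, sub_add_eq_sub_sub, mul_assoc (1 / _)]
  exact mul_le_mul_of_nonneg_left (exp_neg_sq_sub_two_pi_mul_le _ _ _) (by positivity)

lemma summable_gaussDensity_add_two_pi_mul_int {σ : ℝ} (hσ : 0 < σ) (μ x : ℝ) :
    Summable fun k : ℤ => gaussDensity (μ + 2 * π * k) σ x :=
  .of_nonneg_of_le (fun _ => gaussDensity_nonneg hσ.le _ _)
    (fun k => gaussDensity_add_two_pi_mul_le hσ.le μ x k)
    ((summable_exp_neg_mul_int_sq (by positivity)).mul_left _)

lemma wnDensity_eq_tsum_gaussDensity (μ σ x : ℝ) :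
    wnDensity μ σ x = ∑' k : ℤ, gaussDensity (μ + 2 * π * k) σ x := by
  rw [wnDensity, ← (Equiv.neg ℤ).tsum_eq, ← tsum_mul_left]
  refine tsum_congr fun k => ?_
  simp only [gaussDensity, Equiv.neg_apply, Int.cast_neg]
  ring_nf

lemma continuous_wnDensity {σ : ℝ} (hσ : 0 < σ) (μ : ℝ) : Continuous (wnDensity μ σ) := by
  simp only [continuous_iff_continuousAt, funext (wnDensity_eq_tsum_gaussDensity μ σ)]
  intro x₀
  set R := |x₀ - μ| + 1
  have hR : ∀ x ∈ Metric.ball x₀ 1, (x - μ) ^ 2 ≤ R ^ 2 := fun x hx => by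
    rw [Metric.mem_ball, dist_eq] at hx
    rw [← sq_abs]
    gcongr
    linarith [abs_sub_le x x₀ μ]
  refine (continuousOn_tsum (fun k => (continuous_gaussDensity _ σ).continuousOn)
    ((summable_exp_neg_mul_int_sq (c := (π / σ) ^ 2) (by positivity)).mul_left
      (1 / (√(2 * π) * σ) * exp (R ^ 2 / (2 * σ ^ 2)))) fun k x hx => ?_).continuousAt
    (Metric.isOpen_ball.mem_nhds (Metric.mem_ball_self one_pos))
  rw [Real.norm_of_nonneg (gaussDensity_nonneg hσ.le _ _)]
  refine (gaussDensity_add_two_pi_mul_le hσ.le μ x k).trans ?_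
  gcongr _ * exp (?_ / _) * _
  exact hR x hx

lemma gaussDensity_mul_gaussDensity {σ₁ σ₂ : ℝ} (hσ₁ : 0 < σ₁) (hσ₂ : 0 < σ₂) (a b x : ℝ) :
    gaussDensity a σ₁ x * gaussDensity b σ₂ x =
      exp (-(a - b) ^ 2 / (2 * (σ₁ ^ 2 + σ₂ ^ 2))) / √(2 * π * (σ₁ ^ 2 + σ₂ ^ 2)) *
        gaussDensity ((a * σ₂ ^ 2 + b * σ₁ ^ 2) / (σ₁ ^ 2 + σ₂ ^ 2))
          √(σ₁ ^ 2 * σ₂ ^ 2 / (σ₁ ^ 2 + σ₂ ^ 2)) x := by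
  set s := σ₁ ^ 2 + σ₂ ^ 2
  have hs : 0 < s := by positivity
  set σ := √(σ₁ ^ 2 * σ₂ ^ 2 / s)
  have hσ_sq : σ ^ 2 = σ₁ ^ 2 * σ₂ ^ 2 / s := sq_sqrt (by positivity)
  have hσ : 0 < σ := sqrt_pos.2 (by positivity)
  have hexponent : -(x - a) ^ 2 / (2 * σ₁ ^ 2) + -(x - b) ^ 2 / (2 * σ₂ ^ 2) =
      -(a - b) ^ 2 / (2 * s) + -(x - (a * σ₂ ^ 2 + b * σ₁ ^ 2) / s) ^ 2 / (2 * σ ^ 2) := by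
    rw [hσ_sq]
    field_simp
    ring
  have hconst : √(2 * π) * σ₁ * (√(2 * π) * σ₂) = √(2 * π * s) * (√(2 * π) * σ) := by
    refine (sq_eq_sq₀ (by positivity) (by positivity)).1 ?_
    simp only [mul_pow, sq_sqrt two_pi_pos.le, sq_sqrt (by positivity : 0 ≤ 2 * π * s), hσ_sq]
    field_simp
  simp only [gaussDensity]
  rw [mul_mul_mul_comm, ← exp_add, hexponent, exp_add, one_div_mul_one_div, hconst,
    ← one_div_mul_one_div]
  ring

lemma intervalIntegral_mul_tsum_of_nonneg {ι : Type*} [Countable ι] {a b : ℝ} (hab : a ≤ b)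
    {g : ℝ → ℂ} (hg : Measurable g) (hg_norm : ∀ x, ‖g x‖ ≤ 1)
    {f : ι → ℝ → ℝ} {F : ℝ → ℝ} (hf : ∀ i, Measurable (f i)) (hf_nonneg : ∀ i x, 0 ≤ f i x)
    (hF : ∀ x, HasSum (f · x) (F x)) (hF_int : IntervalIntegrable F volume a b) :
    ∫ x in a..b, g x * F x = ∑' i, ∫ x in a..b, g x * f i x := by
  have hterm_enorm : ∀ i x, ‖g x * f i x‖ₑ ≤ ENNReal.ofReal (f i x) := fun i x => by
    rw [← ofReal_norm, norm_mul, Complex.norm_real, Real.norm_of_nonneg (hf_nonneg i x)]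
    exact ENNReal.ofReal_le_ofReal (mul_le_of_le_one_left (hf_nonneg i x) (hg_norm x))
  have hsum_lintegral : ∑' i, ∫⁻ x in Set.Ioc a b, ‖g x * f i x‖ₑ ≠ ∞ := by
    refine ne_top_of_le_ne_top ?_ (ENNReal.tsum_le_tsum fun i => lintegral_mono (hterm_enorm i))
    rw [← lintegral_tsum fun i => (hf i).ennreal_ofReal.aemeasurable]
    refine (lt_of_le_of_lt (lintegral_mono fun x => ?_) hF_int.1.hasFiniteIntegral).ne
    rw [← ENNReal.ofReal_tsum_of_nonneg (hf_nonneg · x) (hF x).summable, (hF x).tsum_eq]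
    exact Real.ofReal_le_enorm _
  have hpointwise : ∀ x, g x * F x = ∑' i, g x * f i x := fun x => by
    rw [← (hF x).tsum_eq, Complex.ofReal_tsum, tsum_mul_left]
  simp only [intervalIntegral.integral_of_le hab, hpointwise]
  exact integral_tsum
    (fun i => (hg.mul (Complex.measurable_ofReal.comp (hf i))).aestronglyMeasurable)
    hsum_lintegral

lemma hasSum_gaussDensity_mul_gaussDensity {σ₁ σ₂ : ℝ} (hσ₁ : 0 < σ₁) (hσ₂ : 0 < σ₂)
    (μ₁ μ₂ x : ℝ) :
    HasSum (fun p : ℤ × ℤ =>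
        gaussDensity (μ₁ + 2 * π * p.1) σ₁ x * gaussDensity (μ₂ + 2 * π * p.2) σ₂ x)
      (wnDensity μ₁ σ₁ x * wnDensity μ₂ σ₂ x) := by
  have h₁ := summable_gaussDensity_add_two_pi_mul_int hσ₁ μ₁ x
  have h₂ := summable_gaussDensity_add_two_pi_mul_int hσ₂ μ₂ x
  rw [wnDensity_eq_tsum_gaussDensity, wnDensity_eq_tsum_gaussDensity]
  exact h₁.hasSum.mul h₂.hasSum <| h₁.mul_of_nonneg h₂
    (fun _ => gaussDensity_nonneg hσ₁.le _ _) (fun _ => gaussDensity_nonneg hσ₂.le _ _)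

/-- Unnormalized first circular moment of the product of two wrapped normal densities. -/
theorem wn_product_moment_integral (μ₁ μ₂ σ₁ σ₂ : ℝ) (hσ₁ : 0 < σ₁) (hσ₂ : 0 < σ₂)
    (μjk : ℤ → ℤ → ℝ) (σbar : ℝ) (w : ℤ → ℤ → ℝ)
    (hμjk : ∀ j k : ℤ, μjk j k =
      ((μ₁ + 2 * Real.pi * (j : ℝ)) * σ₂ ^ 2 + (μ₂ + 2 * Real.pi * (k : ℝ)) * σ₁ ^ 2) /
        (σ₁ ^ 2 + σ₂ ^ 2))
    (hσbar : σbar = Real.sqrt (σ₁ ^ 2 * σ₂ ^ 2 / (σ₁ ^ 2 + σ₂ ^ 2)))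
    (hw : ∀ j k : ℤ, w j k =
      Real.exp (-((μ₁ + 2 * Real.pi * (j : ℝ)) - (μ₂ + 2 * Real.pi * (k : ℝ))) ^ 2 /
          (2 * (σ₁ ^ 2 + σ₂ ^ 2))) / Real.sqrt (2 * Real.pi * (σ₁ ^ 2 + σ₂ ^ 2))) :
    ∫ x in (0 : ℝ)..(2 * Real.pi),
        Complex.exp (Complex.I * (x : ℂ)) * ((wnDensity μ₁ σ₁ x * wnDensity μ₂ σ₂ x : ℝ) : ℂ) =
      ∑' p : ℤ × ℤ, (w p.1 p.2 : ℂ) *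
        ∫ x in (0 : ℝ)..(2 * Real.pi),
          Complex.exp (Complex.I * (x : ℂ)) * ((gaussDensity (μjk p.1 p.2) σbar x : ℝ) : ℂ) := by
  have hσbar_nonneg : 0 ≤ σbar := hσbar ▸ sqrt_nonneg _
  have hterm : ∀ x (p : ℤ × ℤ),
      gaussDensity (μ₁ + 2 * π * p.1) σ₁ x * gaussDensity (μ₂ + 2 * π * p.2) σ₂ x =
        w p.1 p.2 * gaussDensity (μjk p.1 p.2) σbar x := fun x p => by
    rw [hw, hμjk, hσbar]
    exact gaussDensity_mul_gaussDensity hσ₁ hσ₂ _ _ x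
  rw [intervalIntegral_mul_tsum_of_nonneg (F := fun x => wnDensity μ₁ σ₁ x * wnDensity μ₂ σ₂ x)
    (f := fun (p : ℤ × ℤ) x => w p.1 p.2 * gaussDensity (μjk p.1 p.2) σbar x)
    two_pi_pos.le (by fun_prop) (fun x => (Complex.norm_exp_I_mul_ofReal x).le)
    (fun p => (continuous_const.mul (continuous_gaussDensity _ _)).measurable)
    (fun p x => mul_nonneg (by rw [hw]; positivity) (gaussDensity_nonneg hσbar_nonneg _ _))
    (fun x => by simpa only [hterm] using hasSum_gaussDensity_mul_gaussDensity hσ₁ hσ₂ μ₁ μ₂ x)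
    (((continuous_wnDensity hσ₁ μ₁).mul (continuous_wnDensity hσ₂ μ₂)).intervalIntegrable _ _)]
  refine tsum_congr fun p => ?_
  simp only [Complex.ofReal_mul, mul_left_comm (Complex.exp _)]
  exact intervalIntegral.integral_const_mul _ _
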